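/- Let S be a set of N > d points of ℝ^d in general position. The number of distinct labelings in {-1,+1}^N of S realizable by affine classifiers x ↦ sign(hᵀx + b) is at most 2^{d+1} · C(N, d). -/

import Mathlib

open Classical in
/-- sign function: 1 if u ≥ 0, -1 otherwise. -/
noncomputable def sgnR (u : ℝ) : ℤ := if 0 ≤ u then 1 else -1

/-!
A classifier `(h, b)` is a vector of `ℝ^{d+1}` and each point `xᵢ` becomes the linear functional
`(h, b) ↦ hᵀxᵢ + b`; general position says that a nonzero classifier vanishes at no more than `d`
of them. Given a classifier realizing a labeling `q`, move it inside the closed cone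
`{v | qᵢ · fᵢ(v) ≥ 0}` along directions that keep its current zeros, until some further point
reaches the hyperplane; after finitely many steps exactly `d` points lie on it. If two classifiers
vanish on the same `d` points, their combination that also vanishes at a further point is zero,
so they are proportional. Hence `q` is determined by that `d`-set, its values there, and the sign of the
scale: at most `C(N, d) · 2^d · 2` labelings.
-/

open Finset Module

lemma sgnR_eq_sgnR_iff {u v : ℝ} : sgnR u = sgnR v ↔ (0 ≤ u ↔ 0 ≤ v) := by
  unfold sgnR; split_ifs <;> simp [*]

lemma sgnR_eq_one_or_eq_neg_one (u : ℝ) : sgnR u = 1 ∨ sgnR u = -1 := by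
  unfold sgnR; split_ifs <;> simp

lemma sgnR_mul_self_nonneg (u : ℝ) : 0 ≤ (sgnR u : ℝ) * u := by
  unfold sgnR; split_ifs <;> push_cast <;> linarith

lemma sgnR_eq_of_sgnR_mul_nonneg {a u : ℝ} (hu : u ≠ 0) (h : 0 ≤ (sgnR a : ℝ) * u) :
    sgnR a = sgnR u := by
  rw [sgnR_eq_sgnR_iff]
  unfold sgnR at h
  split_ifs at h with ha <;> push_cast at h
  · simp only [ha, true_iff]; linarith
  · simp only [ha, false_iff, not_le]; exact lt_of_le_of_ne (by linarith) hu

lemma mul_pos_of_sgnR_eq {a b : ℝ} (ha : a ≠ 0) (hb : b ≠ 0) (hab : sgnR a = sgnR b) :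
    0 < a * b := by
  rw [sgnR_eq_sgnR_iff] at hab
  rcases ha.lt_or_gt with ha | ha <;> rcases hb.lt_or_gt with hb | hb
  · exact mul_pos_of_neg_of_neg ha hb
  · linarith [hab.2 hb.le]
  · linarith [hab.1 ha.le]
  · exact mul_pos ha hb

lemma sgnR_eq_of_mul_eq_mul {a b x y : ℝ} (hab : 0 < a * b) (h : a * y = b * x) :
    sgnR x = sgnR y := by
  have hy : y * (a * b) = b * b * x := by linear_combination b * h
  have hx : x * (a * b) = a * a * y := by linear_combination -a * h
  rw [sgnR_eq_sgnR_iff]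
  constructor <;> intro hs
  · nlinarith [mul_nonneg hs (mul_self_nonneg b)]
  · nlinarith [mul_nonneg hs (mul_self_nonneg a)]

section SignPatterns

variable {ι E : Type*} [Fintype ι] [AddCommGroup E] [Module ℝ E]

noncomputable def zeroSet (f : ι → E →ₗ[ℝ] ℝ) (v : E) : Finset ι := {i | f i v = 0}

@[simp]
lemma mem_zeroSet {f : ι → E →ₗ[ℝ] ℝ} {v : E} {i : ι} : i ∈ zeroSet f v ↔ f i v = 0 := by
  simp [zeroSet]

lemma zeroSet_smul {f : ι → E →ₗ[ℝ] ℝ} {c : ι → ℝ} (hc : ∀ i, c i ≠ 0) (v : E) :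
    zeroSet (fun i => c i • f i) v = zeroSet f v := by
  ext i; simp [hc i]

/-- For the functionals `(h, b) ↦ hᵀxᵢ + b` with `n = d`, this says that no affine hyperplane
contains more than `d` of the points `xᵢ`. -/
def GeneralPosition (f : ι → E →ₗ[ℝ] ℝ) (n : ℕ) : Prop :=
  ∀ v, v ≠ 0 → #(zeroSet f v) ≤ n

variable {f : ι → E →ₗ[ℝ] ℝ} {n : ℕ}

lemma GeneralPosition.smul (hf : GeneralPosition f n) {c : ι → ℝ} (hc : ∀ i, c i ≠ 0) :
    GeneralPosition (fun i => c i • f i) n := by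
  intro v hv; rw [zeroSet_smul hc]; exact hf v hv

lemma GeneralPosition.eq_zero_of_forall_mem (hf : GeneralPosition f n) {T : Finset ι}
    (hT : n < #T) {v : E} (hv : ∀ i ∈ T, f i v = 0) : v = 0 := by
  by_contra h
  have : #T ≤ #(zeroSet f v) := card_le_card fun i hi => mem_zeroSet.2 (hv i hi)
  have := hf v h
  omega

lemma exists_ne_zero_forall_mem_eq_zero [FiniteDimensional ℝ E] (f : ι → E →ₗ[ℝ] ℝ)
    (T : Finset ι) (hT : #T < finrank ℝ E) : ∃ w, w ≠ 0 ∧ ∀ i ∈ T, f i w = 0 := by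
  let L : E →ₗ[ℝ] T → ℝ := LinearMap.pi fun i => f i
  have : LinearMap.ker L ≠ ⊥ := L.ker_ne_bot_of_finrank_lt (by simpa using hT)
  obtain ⟨w, hwL, hw0⟩ := Submodule.exists_mem_ne_zero_of_ne_bot this
  exact ⟨w, hw0, fun i hi => congrFun (LinearMap.mem_ker.1 hwL) ⟨i, hi⟩⟩

lemma GeneralPosition.exists_zeroSet_ssubset [FiniteDimensional ℝ E] (hf : GeneralPosition f n)
    (hE : n < finrank ℝ E) (hι : n < Fintype.card ι) {v : E} (hv : ∀ i, 0 ≤ f i v)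
    (hZ : #(zeroSet f v) < n) :
    ∃ v', v' ≠ 0 ∧ (∀ i, 0 ≤ f i v') ∧ zeroSet f v ⊂ zeroSet f v' := by
  classical
  obtain ⟨j, -, hj⟩ := exists_mem_notMem_of_card_lt_card (t := univ) (s := zeroSet f v)
    (by rw [card_univ]; omega)
  obtain ⟨w, hw0, hw⟩ := exists_ne_zero_forall_mem_eq_zero f (insert j (zeroSet f v))
    ((card_insert_le _ _).trans_lt (by omega))
  obtain ⟨k, hk⟩ : ∃ k, f k w ≠ 0 := by
    by_contra! h
    exact hw0 (hf.eq_zero_of_forall_mem (T := univ) (by rwa [card_univ]) fun i _ => h i)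
  obtain ⟨u, hu, k, hk⟩ : ∃ u, (∀ i ∈ insert j (zeroSet f v), f i u = 0) ∧ ∃ k, f k u < 0 := by
    rcases hk.lt_or_gt with hk | hk
    · exact ⟨w, hw, k, hk⟩
    · exact ⟨-w, fun i hi => by simp [hw i hi], k, by simpa using hk⟩
  obtain ⟨i₀, hi₀, hmin⟩ := exists_min_image {i | f i u < 0} (fun i => f i v / -f i u)
    ⟨k, by simpa using hk⟩
  rw [mem_filter_univ] at hi₀
  -- the longest step along `u` that stays in the cone; it makes `f i₀` vanish
  set t := f i₀ v / -f i₀ u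
  have ht : 0 ≤ t := div_nonneg (hv i₀) (by linarith)
  have hvu : ∀ i, f i (v + t • u) = f i v + t * f i u := by simp
  refine ⟨v + t • u, fun h0 => hj ?_, fun i => ?_, ?_⟩
  · simpa [hu j (mem_insert_self _ _)] using congrArg (f j) h0
  · rw [hvu]
    by_cases hi : f i u < 0
    · have := (le_div_iff₀ (neg_pos.2 hi)).1 (hmin i (by simpa using hi))
      linarith
    · nlinarith [mul_nonneg ht (not_lt.1 hi), hv i]
  · rw [ssubset_iff_of_subset fun i hi => by
      simp [hvu, mem_zeroSet.1 hi, hu i (mem_insert_of_mem hi)]]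
    refine ⟨i₀, ?_, fun h => hi₀.ne (hu i₀ (mem_insert_of_mem h))⟩
    rw [mem_zeroSet, hvu, div_mul_eq_mul_div, div_neg, mul_div_assoc, div_self hi₀.ne]
    ring

lemma GeneralPosition.exists_card_zeroSet_eq [FiniteDimensional ℝ E] (hf : GeneralPosition f n)
    (hE : n < finrank ℝ E) (hι : n < Fintype.card ι) {v : E} (hv0 : v ≠ 0)
    (hv : ∀ i, 0 ≤ f i v) : ∃ v', v' ≠ 0 ∧ (∀ i, 0 ≤ f i v') ∧ #(zeroSet f v') = n := by
  by_cases hZ : #(zeroSet f v) < n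
  · obtain ⟨v', hv'0, hv', hvv'⟩ := hf.exists_zeroSet_ssubset hE hι hv hZ
    have := card_lt_card hvv'
    exact hf.exists_card_zeroSet_eq hE hι hv'0 hv'
  · exact ⟨v, hv0, hv, le_antisymm (hf v hv0) (not_lt.1 hZ)⟩
termination_by n - #(zeroSet f v)

lemma GeneralPosition.exists_card_zeroSet_eq_sgnR_eq [FiniteDimensional ℝ E]
    (hf : GeneralPosition f n) (hE : n < finrank ℝ E) (hι : n < Fintype.card ι) {v₀ : E}
    (hv₀ : v₀ ≠ 0) :
    ∃ v, #(zeroSet f v) = n ∧ ∀ i ∉ zeroSet f v, sgnR (f i v₀) = sgnR (f i v) := by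
  set c : ι → ℝ := fun i => sgnR (f i v₀)
  have hc : ∀ i, c i ≠ 0 := fun i => by
    rcases sgnR_eq_one_or_eq_neg_one (f i v₀) with h | h <;> simp [c, h]
  obtain ⟨v, -, hv, hZ⟩ :=
    (hf.smul hc).exists_card_zeroSet_eq hE hι hv₀ fun i => sgnR_mul_self_nonneg (f i v₀)
  rw [zeroSet_smul hc] at hZ
  exact ⟨v, hZ, fun i hi => sgnR_eq_of_sgnR_mul_nonneg (mt mem_zeroSet.2 hi) (hv i)⟩

lemma GeneralPosition.sgnR_eq_of_zeroSet_eq (hf : GeneralPosition f n) {v v' : E}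
    (hZ : #(zeroSet f v) = n) (hvv' : zeroSet f v = zeroSet f v') {i₀ : ι}
    (hi₀ : i₀ ∉ zeroSet f v) (h₀ : sgnR (f i₀ v) = sgnR (f i₀ v')) (i : ι) :
    sgnR (f i v) = sgnR (f i v') := by
  classical
  have hu : f i₀ v • v' - f i₀ v' • v = 0 := by
    refine hf.eq_zero_of_forall_mem (T := insert i₀ (zeroSet f v))
      (by rw [card_insert_of_notMem hi₀]; omega) fun j hj => ?_
    rcases mem_insert.1 hj with rfl | hj
    · simp [mul_comm]
    · simp [mem_zeroSet.1 hj, mem_zeroSet.1 (hvv' ▸ hj)]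
  have hi₀' : i₀ ∉ zeroSet f v' := hvv' ▸ hi₀
  refine sgnR_eq_of_mul_eq_mul (mul_pos_of_sgnR_eq (mt mem_zeroSet.2 hi₀)
    (mt mem_zeroSet.2 hi₀') h₀) ?_
  simpa [sub_eq_zero] using congrArg (f i) hu

def signPatterns (f : ι → E →ₗ[ℝ] ℝ) : Set (ι → ℤ) :=
  {q | ∃ v, v ≠ 0 ∧ ∀ i, q i = sgnR (f i v)}

def signPatternsAt (f : ι → E →ₗ[ℝ] ℝ) (Z : Finset ι) : Set (ι → ℤ) :=
  {q ∈ signPatterns f | ∃ v, zeroSet f v = Z ∧ ∀ i ∉ Z, q i = sgnR (f i v)}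

lemma GeneralPosition.signPatterns_eq_biUnion [FiniteDimensional ℝ E]
    (hf : GeneralPosition f n) (hE : n < finrank ℝ E) (hι : n < Fintype.card ι) :
    signPatterns f = ⋃ Z ∈ powersetCard n univ, signPatternsAt f Z := by
  refine subset_antisymm (fun q hq => ?_) (Set.iUnion₂_subset fun _ _ => Set.sep_subset _ _)
  obtain ⟨v₀, hv₀, hq⟩ := hq
  obtain ⟨v, hZ, hv⟩ := hf.exists_card_zeroSet_eq_sgnR_eq hE hι hv₀
  exact Set.mem_biUnion (mem_powersetCard.2 ⟨subset_univ _, hZ⟩)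
    ⟨⟨v₀, hv₀, hq⟩, v, rfl, fun i hi => (hq i).trans (hv i hi)⟩

lemma GeneralPosition.ncard_signPatternsAt_le (hf : GeneralPosition f n)
    (hι : n < Fintype.card ι) {Z : Finset ι} (hZ : #Z = n) :
    (signPatternsAt f Z).ncard ≤ 2 ^ (n + 1) := by
  classical
  obtain ⟨i₀, -, hi₀⟩ := exists_mem_notMem_of_card_lt_card (t := univ) (s := Z)
    (by rwa [card_univ, hZ])
  -- a pattern in the fiber is determined by its values on `Z` and at one point off `Z`
  let T : Finset (↥(insert i₀ Z) → ℤ) := Fintype.piFinset fun _ => {1, -1}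
  calc (signPatternsAt f Z).ncard ≤ (T : Set (↥(insert i₀ Z) → ℤ)).ncard := by
        refine Set.ncard_le_ncard_of_injOn (t := (T : Set (↥(insert i₀ Z) → ℤ)))
          (insert i₀ Z).restrict ?_ ?_
        · rintro q ⟨⟨v, -, hq⟩, -⟩
          simp [T, hq, sgnR_eq_one_or_eq_neg_one]
        · rintro q ⟨-, v, rfl, hq⟩ q' ⟨-, v', hvv', hq'⟩ h
          funext i
          by_cases hi : i ∈ insert i₀ (zeroSet f v)
          · exact congrFun h ⟨i, hi⟩
          rw [mem_insert, not_or] at hi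
          rw [hq i hi.2, hq' i hi.2]
          refine hf.sgnR_eq_of_zeroSet_eq hZ hvv'.symm hi₀ ?_ i
          rw [← hq i₀ hi₀, ← hq' i₀ hi₀]
          exact congrFun h ⟨i₀, mem_insert_self _ _⟩
    _ = 2 ^ (n + 1) := by
        rw [Set.ncard_coe_finset, Fintype.card_piFinset, prod_const, card_univ, Fintype.card_coe,
          card_insert_of_notMem hi₀, hZ]
        rfl

theorem GeneralPosition.ncard_signPatterns_le [FiniteDimensional ℝ E]
    (hf : GeneralPosition f n) (hE : n < finrank ℝ E) (hι : n < Fintype.card ι) :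
    (signPatterns f).ncard ≤ 2 ^ (n + 1) * (Fintype.card ι).choose n := by
  rw [hf.signPatterns_eq_biUnion hE hι]
  calc _ ≤ ∑ Z ∈ powersetCard n univ, (signPatternsAt f Z).ncard := set_ncard_biUnion_le _ _
    _ ≤ ∑ Z ∈ powersetCard n (univ : Finset ι), 2 ^ (n + 1) :=
        sum_le_sum fun Z hZ => hf.ncard_signPatternsAt_le hι (mem_powersetCard.1 hZ).2
    _ = 2 ^ (n + 1) * (Fintype.card ι).choose n := by simp [card_powersetCard, mul_comm]

end SignPatterns

section Affine

variable {ι κ : Type*} [Fintype κ]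

noncomputable def affineEval (x : ι → κ → ℝ) (i : ι) : (κ → ℝ) × ℝ →ₗ[ℝ] ℝ :=
  Fintype.linearCombination ℝ (x i) ∘ₗ LinearMap.fst ℝ _ _ + LinearMap.snd ℝ _ _

@[simp]
lemma affineEval_apply (x : ι → κ → ℝ) (i : ι) (p : (κ → ℝ) × ℝ) :
    affineEval x i p = ∑ j, p.1 j * x i j + p.2 := by
  simp [affineEval, Fintype.linearCombination_apply]

lemma generalPosition_affineEval [Fintype ι] {x : ι → κ → ℝ} {n : ℕ}
    (hx : ∀ (h : κ → ℝ) (b : ℝ), h ≠ 0 → Set.ncard {i | ∑ j, h j * x i j + b = 0} ≤ n) :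
    GeneralPosition (affineEval x) n := by
  rintro ⟨h, b⟩ hv
  by_cases hh : h = 0
  · subst hh
    have hb : b ≠ 0 := by simpa using hv
    simp [zeroSet, hb]
  · rw [← Set.ncard_coe_finset]
    convert hx h b hh
    simp [zeroSet]

lemma setOf_sgnR_affine_eq_signPatterns [Fintype ι] (x : ι → κ → ℝ) :
    {q : ι → ℤ | ∃ (h : κ → ℝ) (b : ℝ), ∀ i, q i = sgnR (∑ j, h j * x i j + b)} =
      signPatterns (affineEval x) := by
  ext q
  constructor
  · rintro ⟨h, b, hq⟩
    by_cases hv : (h, b) = 0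
    · -- the constant pattern of the zero classifier is also realized by `(0, 1)`
      obtain ⟨rfl, rfl⟩ := Prod.mk_eq_zero.1 hv
      exact ⟨(0, 1), by simp, fun i => by simp [hq, sgnR]⟩
    · exact ⟨(h, b), hv, by simpa using hq⟩
  · rintro ⟨⟨h, b⟩, -, hq⟩
    exact ⟨h, b, by simpa using hq⟩

end Affine

/-- The number of labelings of N > d points in general position realizable by
affine classifiers is at most 2^(d+1) * C(N,d). -/
theorem stmt4 (d N : ℕ) (hdN : d < N) (x : Fin N → (Fin d → ℝ))
    (hgen : ∀ (h : Fin d → ℝ) (b : ℝ), h ≠ 0 →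
      Set.ncard {i : Fin N | (∑ j, h j * x i j) + b = 0} ≤ d) :
    Set.ncard {q : Fin N → ℤ | ∃ (h : Fin d → ℝ) (b : ℝ),
        ∀ i, q i = sgnR ((∑ j, h j * x i j) + b)}
      ≤ 2 ^ (d + 1) * N.choose d := by
  rw [setOf_sgnR_affine_eq_signPatterns]
  simpa using (generalPosition_affineEval hgen).ncard_signPatterns_le (by simp) (by simpa using hdN)
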